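/- Let t ≥ 3 be an integer and let G be a connected graph on n vertices. If G contains a saturating structure (with parameter t) of length n whose core is isomorphic to K_t, then wsat(G, K_{1,t}) = C(t,2). -/

import Mathlib

open MeasureTheory Filter

namespace WsatRandom

/-- `G'` contains a subgraph isomorphic to `H` that contains the edge `e`. -/
def ContainsCopyWithEdge {V W : Type*} (G' : SimpleGraph V) (H : SimpleGraph W)
    (e : Sym2 V) : Prop :=
  ∃ f : W → V, Function.Injective f ∧ (∀ a b, H.Adj a b → G'.Adj (f a) (f b)) ∧
    ∃ a b, H.Adj a b ∧ e = s(f a, f b)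

/-- `F` is a weakly `(G,H)`-saturated spanning subgraph of `G`: there is an ordering
`e_1, …, e_m` of the edges of `G` not in `F` such that adding them one by one, each newly
added edge lies in a copy of `H`. -/
def WeaklySaturated {V W : Type*} (G F : SimpleGraph V) (H : SimpleGraph W) : Prop :=
  F ≤ G ∧ ∃ es : List (Sym2 V), es.Nodup ∧
    (∀ e, e ∈ es ↔ e ∈ G.edgeSet \ F.edgeSet) ∧
    ∀ i : Fin es.length,
      ContainsCopyWithEdge
        (F ⊔ SimpleGraph.fromEdgeSet {e | e ∈ es.take ((i : ℕ) + 1)}) H (es.get i)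

/-- The weak saturation number: the minimum number of edges of a weakly `(G,H)`-saturated
spanning subgraph of `G`. -/
noncomputable def wsat {V W : Type*} (G : SimpleGraph V) (H : SimpleGraph W) : ℕ :=
  sInf {m | ∃ F, WeaklySaturated G F H ∧ F.edgeSet.ncard = m}

/-- Minimum degree of a graph. -/
noncomputable def minDeg {W : Type*} (H : SimpleGraph W) : ℕ :=
  sInf {d | ∃ v, d = {u | H.Adj v u}.ncard}

/-- The Bernoulli(p) measure on `Bool`. -/
noncomputable def bernoulliMeasure (p : ℝ) : Measure Bool :=
  ENNReal.ofReal p • Measure.dirac true + ENNReal.ofReal (1 - p) • Measure.dirac false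

/-- The product Bernoulli(p) measure on edge-indicator functions; its pushforward under
`graphOf` is the Erdős–Rényi random graph `G(n,p)`. -/
noncomputable def edgeMeasure (n : ℕ) (p : ℝ) : Measure (Sym2 (Fin n) → Bool) :=
  Measure.pi fun _ => bernoulliMeasure p

/-- The graph on `[n]` determined by an edge-indicator function. -/
def graphOf {n : ℕ} (ω : Sym2 (Fin n) → Bool) : SimpleGraph (Fin n) :=
  SimpleGraph.fromEdgeSet {e | ω e = true}

/-- The star `K_{1,t}`. -/
def star (t : ℕ) : SimpleGraph (Fin 1 ⊕ Fin t) :=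
  completeBipartiteGraph (Fin 1) (Fin t)

/-- `F` together with the vertex ordering `v : Fin x → V` is a saturating structure
(with parameter `t`) of length `x` and core size `y` in `G`: `t ≤ y < x`, `F` is a subgraph
of `G` with all edges among the listed vertices, and every vertex `v i` with `y ≤ i` has
exactly `t-1` neighbors in `F` among the previous vertices. -/
def IsSaturatingStructure {V : Type*} (G : SimpleGraph V) (t x y : ℕ)
    (F : SimpleGraph V) (v : Fin x → V) : Prop :=
  t ≤ y ∧ y < x ∧ F ≤ G ∧ Function.Injective v ∧
    (∀ a b : V, F.Adj a b → a ∈ Set.range v ∧ b ∈ Set.range v) ∧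
    ∀ i : Fin x, y ≤ (i : ℕ) →
      {j : Fin x | (j : ℕ) < (i : ℕ) ∧ F.Adj (v i) (v j)}.ncard = t - 1

/-!
Upper bound: the core `K_t` is weakly saturated in `G`. Adding the vertices of the saturating
structure one at a time, every vertex already present has at least `t - 1` neighbours among the
present ones (a core vertex inside the core, a later vertex among its predecessors), so every edge
from the new vertex to an old one completes a star `K_{1,t}` centred at the old vertex.

Lower bound: the structure gives `G` minimum degree at least `t - 1`. Given a weakly saturated `F`,
call the first step at which the degree of a vertex reaches `t - 1` its activation time. Each added
edge lies in a star centred at an endpoint which is already active, so an edge at `a` present at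
the activation time of `a` but not in `F` leads to a vertex activated strictly earlier. Listing
the vertices by activation time, the `j`-th one therefore has at least `t - 1 - j` edges of `F`
to later vertices, and `F` has at least `∑ j < t, (t - 1 - j) = C(t, 2)` edges.
-/

open Finset SimpleGraph

section Star

variable {V : Type*} {t : ℕ}

theorem star_adj_inl_inr (i : Fin 1) (j : Fin t) : (star t).Adj (.inl i) (.inr j) := by
  simp [star]

theorem ContainsCopyWithEdge.mono {W : Type*} {G₁ G₂ : SimpleGraph V} {H : SimpleGraph W}
    {e : Sym2 V} (h : ContainsCopyWithEdge G₁ H e) (hle : G₁ ≤ G₂) :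
    ContainsCopyWithEdge G₂ H e := by
  obtain ⟨f, hf, hadj, he⟩ := h
  exact ⟨f, hf, fun a b hab => hle (hadj a b hab), he⟩

theorem containsCopyWithEdge_star_iff [Finite V] (ht : 0 < t) {G : SimpleGraph V}
    {e : Sym2 V} :
    ContainsCopyWithEdge G (star t) e ↔
      ∃ c d, e = s(c, d) ∧ G.Adj c d ∧ t ≤ (G.neighborSet c).ncard := by
  constructor
  · rintro ⟨f, hf, hadj, a, b, hab, rfl⟩
    have hcenter : t ≤ (G.neighborSet (f (.inl 0))).ncard := by
      have hleaves : Set.range (f ∘ .inr) ⊆ G.neighborSet (f (.inl 0)) := by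
        rintro _ ⟨j, rfl⟩
        exact hadj _ _ (star_adj_inl_inr 0 j)
      calc t = (Set.range (f ∘ .inr)).ncard := by
            rw [← Set.image_univ, Set.ncard_image_of_injective _
              (hf.comp Sum.inr_injective), Set.ncard_univ, Nat.card_eq_fintype_card,
              Fintype.card_fin]
        _ ≤ _ := Set.ncard_le_ncard hleaves
    rcases a with a | a <;> rcases b with b | b <;> simp [star] at hab
    · obtain rfl := Subsingleton.elim a 0
      exact ⟨_, _, rfl, hadj _ _ (star_adj_inl_inr 0 b), hcenter⟩
    · obtain rfl := Subsingleton.elim b 0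
      exact ⟨_, _, Sym2.eq_swap, hadj _ _ (star_adj_inl_inr 0 a), hcenter⟩
  · rintro ⟨c, d, rfl, hcd, hdeg⟩
    obtain ⟨T, hdT, hTN, hT⟩ := Set.exists_subsuperset_card_eq
      (Set.singleton_subset_iff.mpr hcd) (by simpa [Nat.one_le_iff_ne_zero] using ht.ne') hdeg
    have hcT : c ∉ T := fun h => G.ne_of_adj (hTN h) rfl
    let eT : T ≃ Fin t := Finite.equivFinOfCardEq (by rwa [Nat.card_coe_set_eq])
    refine ⟨Sum.elim (fun _ => c) (fun j => eT.symm j), ?_, ?_,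
      .inl 0, .inr (eT ⟨d, hdT rfl⟩), star_adj_inl_inr _ _, by simp⟩
    · rintro (a | a) (b | b) hab <;> simp only [Sum.elim_inl, Sum.elim_inr] at hab
      · exact congrArg Sum.inl (Subsingleton.elim a b)
      · exact absurd (hab ▸ (eT.symm b).2) hcT
      · exact absurd (hab ▸ (eT.symm a).2) hcT
      · exact congrArg Sum.inr (eT.symm.injective (Subtype.ext hab))
    · rintro (a | a) (b | b) hab <;> simp [star] at hab
      · exact hTN (eT.symm b).2
      · exact G.adj_symm (hTN (eT.symm a).2)

end Star

theorem getElem_mem_take_succ {α : Type*} {l : List α} {i : ℕ} (hi : i < l.length) :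
    l[i] ∈ l.take (i + 1) :=
  List.mem_take_iff_getElem.mpr ⟨i, by omega, rfl⟩

section WeaklySaturated

variable {V W : Type*} {G F : SimpleGraph V} {H : SimpleGraph W}

def addPrefix (F : SimpleGraph V) (es : List (Sym2 V)) (i : ℕ) : SimpleGraph V :=
  F ⊔ fromEdgeSet {e | e ∈ es.take i}

theorem addPrefix_adj {es : List (Sym2 V)} {i : ℕ} {a b : V} :
    (addPrefix F es i).Adj a b ↔ F.Adj a b ∨ s(a, b) ∈ es.take i ∧ a ≠ b := by
  simp [addPrefix]

theorem weaklySaturated_iff : WeaklySaturated G F H ↔ F ≤ G ∧ ∃ es : List (Sym2 V),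
    es.Nodup ∧ (∀ e, e ∈ es ↔ e ∈ G.edgeSet \ F.edgeSet) ∧
    ∀ i (hi : i < es.length), ContainsCopyWithEdge (addPrefix F es (i + 1)) H es[i] :=
  and_congr_right fun _ => exists_congr fun _ => and_congr_right fun _ =>
    and_congr_right fun _ => ⟨fun h i hi => h ⟨i, hi⟩, fun h i => h i i.2⟩

theorem weaklySaturated_self : WeaklySaturated G G H :=
  ⟨le_rfl, [], List.nodup_nil, by simp, fun i => i.elim0⟩

theorem le_addPrefix_length {es : List (Sym2 V)}
    (hes : ∀ e, e ∈ es ↔ e ∈ G.edgeSet \ F.edgeSet) : G ≤ addPrefix F es es.length := by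
  intro a b hab
  rw [addPrefix_adj, List.take_length, hes]
  by_cases hF : F.Adj a b
  · exact .inl hF
  · exact .inr ⟨⟨hab, hF⟩, hab.ne⟩

theorem WeaklySaturated.trans {G₁ G₂ G₃ : SimpleGraph V} (h₂₃ : WeaklySaturated G₃ G₂ H)
    (h₁₂ : WeaklySaturated G₂ G₁ H) : WeaklySaturated G₃ G₁ H := by
  rw [weaklySaturated_iff] at *
  obtain ⟨h12, l₁, nd₁, mem₁, copy₁⟩ := h₁₂
  obtain ⟨h23, l₂, nd₂, mem₂, copy₂⟩ := h₂₃
  refine ⟨h12.trans h23, l₁ ++ l₂, ?_, fun e => ?_, fun i hi => ?_⟩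
  · exact List.nodup_append.mpr ⟨nd₁, nd₂, fun a ha b hb hab =>
      ((mem₂ b).mp hb).2 (hab ▸ ((mem₁ a).mp ha).1)⟩
  · have h12' := edgeSet_mono h12
    have h23' := edgeSet_mono h23
    simp only [List.mem_append, mem₁, mem₂, Set.mem_sdiff]
    by_cases e ∈ G₂.edgeSet <;> grind
  · by_cases hi₁ : i < l₁.length
    · rw [List.getElem_append_left hi₁, addPrefix, List.take_append_of_le_length (by omega)]
      exact copy₁ i hi₁
    · obtain ⟨j, rfl⟩ := Nat.exists_eq_add_of_le (not_lt.mp hi₁)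
      have hj : j < l₂.length := by simp at hi; omega
      have hget : (l₁ ++ l₂)[l₁.length + j] = l₂[j] := by simp
      rw [hget]
      refine (copy₂ j hj).mono fun a b hab => ?_
      rw [addPrefix_adj] at hab ⊢
      rw [List.take_append, List.take_of_length_le (by omega), List.mem_append,
        show l₁.length + j + 1 - l₁.length = j + 1 by omega]
      rcases hab with hab | hab
      · have h := le_addPrefix_length mem₁ hab
        rw [addPrefix_adj, List.take_length] at h
        rcases h with h | h
        · exact .inl h
        · exact .inr ⟨.inl h.1, h.2⟩
      · exact .inr ⟨.inr hab.1, hab.2⟩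

theorem exists_weaklySaturated_ncard_eq_wsat (G : SimpleGraph V) (H : SimpleGraph W) :
    ∃ F, WeaklySaturated G F H ∧ F.edgeSet.ncard = wsat G H :=
  Nat.sInf_mem (s := {m | ∃ F, WeaklySaturated G F H ∧ F.edgeSet.ncard = m})
    ⟨_, G, weaklySaturated_self, rfl⟩

theorem wsat_le_ncard (h : WeaklySaturated G F H) : wsat G H ≤ F.edgeSet.ncard :=
  Nat.sInf_le ⟨F, h, rfl⟩

theorem weaklySaturated_star_of_forall_adj [Finite V] {t : ℕ} (ht : 0 < t) (hFG : F ≤ G)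
    (h : ∀ c d, G.Adj c d → ¬F.Adj c d →
      t - 1 ≤ (F.neighborSet c).ncard ∨ t - 1 ≤ (F.neighborSet d).ncard) :
    WeaklySaturated G F (star t) := by
  have hfin : (G.edgeSet \ F.edgeSet).Finite := Set.toFinite _
  rw [weaklySaturated_iff]
  refine ⟨hFG, hfin.toFinset.toList, Finset.nodup_toList _, by simp, fun i hi => ?_⟩
  set es := hfin.toFinset.toList
  have hmem : es[i] ∈ G.edgeSet \ F.edgeSet :=
    hfin.mem_toFinset.mp (Finset.mem_toList.mp (List.getElem_mem hi))
  have copy_of_center (c d : V) (he : es[i] = s(c, d)) (hc : t - 1 ≤ (F.neighborSet c).ncard) :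
      ContainsCopyWithEdge (addPrefix F es (i + 1)) (star t) es[i] := by
    have htake := getElem_mem_take_succ hi
    rw [he] at hmem htake ⊢
    obtain ⟨hG, hF⟩ := hmem
    have hcd : (addPrefix F es (i + 1)).Adj c d :=
      addPrefix_adj.mpr (.inr ⟨htake, G.ne_of_adj hG⟩)
    refine (containsCopyWithEdge_star_iff ht).mpr ⟨c, d, rfl, hcd, ?_⟩
    calc t ≤ (insert d (F.neighborSet c)).ncard := by
          rw [Set.ncard_insert_of_notMem (show d ∉ F.neighborSet c from hF)]; omega
      _ ≤ _ := Set.ncard_le_ncard (Set.insert_subset hcd fun x hx => le_sup_left (a := F) hx)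
  obtain ⟨a, b, hab⟩ : ∃ a b, es[i] = s(a, b) :=
    Sym2.ind (f := fun e => ∃ a b, e = s(a, b)) (fun a b => ⟨a, b, rfl⟩) _
  have hG : G.Adj a b := by simpa [hab] using hmem.1
  have hF : ¬F.Adj a b := by simpa [hab] using hmem.2
  rcases h a b hG hF with ha | hb
  · exact copy_of_center a b hab ha
  · exact copy_of_center b a (hab.trans Sym2.eq_swap) hb

end WeaklySaturated

section Counting

variable {V : Type*} [Fintype V]

theorem exists_equiv_fin_monotone {α : Type*} [LinearOrder α] (f : V → α) :
    ∃ σ : Fin (Fintype.card V) ≃ V, Monotone (f ∘ σ) :=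
  let e := (Fintype.equivFin V).symm
  ⟨(Tuple.sort (f ∘ e)).trans e, Tuple.monotone_sort (f ∘ e)⟩

theorem sum_ncard_adj_lt_eq_ncard_edgeSet {α : Type*} [LinearOrder α] (G : SimpleGraph V)
    {r : V → α} (hr : Function.Injective r) :
    ∑ a, {x | G.Adj a x ∧ r a < r x}.ncard = G.edgeSet.ncard := by
  classical
  simp_rw [Set.ncard_eq_toFinset_card', Set.toFinset_ofPred]
  rw [← Finset.card_sigma]
  refine Finset.card_bij (fun p _ => s(p.1, p.2)) ?_ ?_ ?_
  · rintro ⟨a, x⟩ h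
    simp only [Finset.mem_sigma, Finset.mem_filter, Finset.mem_univ, true_and] at h
    simpa using h.1
  · rintro ⟨a, x⟩ h ⟨b, y⟩ h' he
    simp only [Finset.mem_sigma, Finset.mem_filter, Finset.mem_univ, true_and] at h h'
    rcases Sym2.eq_iff.mp he with ⟨rfl, rfl⟩ | ⟨rfl, rfl⟩
    · rfl
    · exact absurd (h.2.trans h'.2) (lt_irrefl _)
  · intro e he
    induction e using Sym2.ind with
    | h a b =>
      have hab : G.Adj a b := by simpa using he
      rcases (hr.ne (G.ne_of_adj hab)).lt_or_gt with h | h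
      · exact ⟨⟨a, b⟩, by simp [hab, h], rfl⟩
      · exact ⟨⟨b, a⟩, by simp [hab.symm, h], Sym2.eq_swap⟩

theorem sum_range_sub_le_ncard_edgeSet (F : SimpleGraph V) (time : V → ℕ) (N : V → Set V)
    (k : ℕ) (hN : ∀ a, k ≤ (N a).ncard) (hirrefl : ∀ a, a ∉ N a)
    (hback : ∀ a x, x ∈ N a → ¬F.Adj a x → time x < time a) :
    ∑ j ∈ range (Fintype.card V), (k - j) ≤ F.edgeSet.ncard := by
  obtain ⟨σ, hσ⟩ := exists_equiv_fin_monotone time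
  have hforward (j) : k - j ≤ {x | F.Adj (σ j) x ∧ σ.symm (σ j) < σ.symm x}.ncard := by
    have hsub :
        N (σ j) ⊆ σ '' Set.Iio j ∪ {x | F.Adj (σ j) x ∧ σ.symm (σ j) < σ.symm x} := by
      intro x hx
      obtain ⟨i, rfl⟩ := σ.surjective x
      simp only [Set.mem_union, Set.mem_image, Set.mem_Iio, σ.injective.eq_iff, exists_eq_right,
        Set.mem_ofPred_eq, Equiv.symm_apply_apply]
      have hij : i ≠ j := by rintro rfl; exact hirrefl _ hx
      by_cases hF : F.Adj (σ j) (σ i)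
      · exact hij.lt_or_gt.imp_right (⟨hF, ·⟩)
      · refine .inl (lt_of_not_ge fun hji => ?_)
        exact (hback _ _ hx hF).not_ge (hσ hji)
    have hpast : (σ '' Set.Iio j).ncard = j := by
      rw [Set.ncard_image_of_injective _ σ.injective, Set.ncard_eq_toFinset_card',
        Set.toFinset_Iio, Fin.card_Iio]
    have := (Set.ncard_le_ncard hsub).trans (Set.ncard_union_le _ _)
    have := hN (σ j)
    omega
  calc ∑ j ∈ range (Fintype.card V), (k - j) = ∑ j : Fin (Fintype.card V), (k - j) :=
        (Fin.sum_univ_eq_sum_range (k - ·) _).symm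
    _ ≤ ∑ j, {x | F.Adj (σ j) x ∧ σ.symm (σ j) < σ.symm x}.ncard :=
        sum_le_sum fun j _ => hforward j
    _ = ∑ a, {x | F.Adj a x ∧ σ.symm a < σ.symm x}.ncard :=
        Equiv.sum_comp σ (fun a => {x | F.Adj a x ∧ σ.symm a < σ.symm x}.ncard)
    _ = F.edgeSet.ncard := sum_ncard_adj_lt_eq_ncard_edgeSet F σ.symm.injective

end Counting

section LowerBound

variable {V : Type*} {G F : SimpleGraph V}

theorem neighborSet_addPrefix_succ_subset {es : List (Sym2 V)} {p : ℕ} (hp : p < es.length)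
    {c d : V} (he : es[p] = s(c, d)) :
    (addPrefix F es (p + 1)).neighborSet c ⊆ insert d ((addPrefix F es p).neighborSet c) := by
  intro x hx
  rcases addPrefix_adj.mp hx with h | ⟨h, hne⟩
  · exact .inr (addPrefix_adj.mpr (.inl h))
  · rw [List.take_add_one, List.getElem?_eq_getElem hp, Option.toList_some, List.mem_append,
      List.mem_singleton] at h
    rcases h with h | h
    · exact .inr (addPrefix_adj.mpr (.inr ⟨h, hne⟩))
    · exact .inl (Sym2.congr_right.mp (h.trans he))

theorem choose_two_le_sum_range_sub {t n : ℕ} (htn : t ≤ n) :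
    t.choose 2 ≤ ∑ j ∈ range n, (t - 1 - j) :=
  calc t.choose 2 = ∑ j ∈ range t, j := by rw [Finset.sum_range_id, Nat.choose_two_right]
    _ = ∑ j ∈ range t, (t - 1 - j) := (Finset.sum_range_reflect _ t).symm
    _ ≤ ∑ j ∈ range n, (t - 1 - j) :=
        Finset.sum_le_sum_of_subset (Finset.range_subset_range.mpr htn)

theorem WeaklySaturated.choose_two_le_ncard_edgeSet [Fintype V] {t : ℕ}
    (hws : WeaklySaturated G F (star t)) (ht : 0 < t) (htV : t ≤ Fintype.card V)
    (hdeg : ∀ a, t - 1 ≤ (G.neighborSet a).ncard) : t.choose 2 ≤ F.edgeSet.ncard := by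
  classical
  obtain ⟨-, es, -, hes, hcopy⟩ := weaklySaturated_iff.mp hws
  have hactivated (a : V) : ∃ i, t - 1 ≤ ((addPrefix F es i).neighborSet a).ncard :=
    ⟨es.length, (hdeg a).trans (Set.ncard_le_ncard fun _ hx => le_addPrefix_length hes hx)⟩
  let activation a := Nat.find (hactivated a)
  have hcenter (p : ℕ) (hp : p < es.length) :
      ∃ c d, es[p] = s(c, d) ∧ activation c ≤ p := by
    obtain ⟨c, d, he, -, hc⟩ := (containsCopyWithEdge_star_iff ht).mp (hcopy p hp)
    refine ⟨c, d, he, Nat.find_min' _ ?_⟩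
    have := (Set.ncard_le_ncard (neighborSet_addPrefix_succ_subset (F := F) hp he)).trans
      (Set.ncard_insert_le _ _)
    omega
  have hback (a x : V) (hx : (addPrefix F es (activation a)).Adj a x) (hF : ¬F.Adj a x) :
      activation x < activation a := by
    obtain ⟨hmem, -⟩ := (addPrefix_adj.mp hx).resolve_left hF
    obtain ⟨q, hq, hqe⟩ := List.mem_take_iff_getElem.mp hmem
    obtain ⟨c, d, he, hc⟩ := hcenter q (by omega)
    rcases Sym2.eq_iff.mp (hqe.symm.trans he) with ⟨rfl, -⟩ | ⟨-, rfl⟩ <;> omega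
  exact (choose_two_le_sum_range_sub htV).trans <| sum_range_sub_le_ncard_edgeSet F activation
    (fun a => (addPrefix F es (activation a)).neighborSet a) (t - 1)
    (fun a => Nat.find_spec (hactivated a)) (fun a h => (addPrefix F es _).ne_of_adj h rfl) hback

theorem choose_two_le_wsat [Fintype V] {t : ℕ} (ht : 0 < t) (htV : t ≤ Fintype.card V)
    (hdeg : ∀ a, t - 1 ≤ (G.neighborSet a).ncard) : t.choose 2 ≤ wsat G (star t) := by
  obtain ⟨F, hF, hcard⟩ := exists_weaklySaturated_ncard_eq_wsat G (star t)
  exact hcard ▸ hF.choose_two_le_ncard_edgeSet ht htV hdeg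

end LowerBound

section SaturatingStructure

variable {V : Type*} {G F : SimpleGraph V} {t x : ℕ} {v : Fin x → V}

def prefixGraph (G : SimpleGraph V) (v : Fin x → V) (i : ℕ) : SimpleGraph V where
  Adj a b := G.Adj a b ∧ a ∈ v '' {j | (j : ℕ) < i} ∧ b ∈ v '' {j | (j : ℕ) < i}
  symm := ⟨fun _ _ h => ⟨h.1.symm, h.2.2, h.2.1⟩⟩
  loopless := ⟨fun _ h => G.irrefl h.1⟩

theorem prefixGraph_adj {i : ℕ} {a b : V} : (prefixGraph G v i).Adj a b ↔
    G.Adj a b ∧ a ∈ v '' {j | (j : ℕ) < i} ∧ b ∈ v '' {j | (j : ℕ) < i} :=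
  Iff.rfl

theorem prefixGraph_mono : Monotone (prefixGraph G v) := by
  intro i i' hii' a b hab
  obtain ⟨hab, ⟨j, hj, hja⟩, ⟨k, hk, hkb⟩⟩ := prefixGraph_adj.mp hab
  exact prefixGraph_adj.mpr
    ⟨hab, ⟨j, lt_of_lt_of_le hj hii', hja⟩, ⟨k, lt_of_lt_of_le hk hii', hkb⟩⟩

theorem prefixGraph_length (hv : Function.Surjective v) : prefixGraph G v x = G := by
  ext a b
  obtain ⟨j, rfl⟩ := hv a
  obtain ⟨k, rfl⟩ := hv b
  exact prefixGraph_adj.trans (and_iff_left ⟨⟨j, j.2, rfl⟩, ⟨k, k.2, rfl⟩⟩)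

theorem ncard_edgeSet_prefixGraph_le (htx : t ≤ x) :
    (prefixGraph G v t).edgeSet.ncard ≤ t.choose 2 := by
  classical
  have hsub : (prefixGraph G v t).edgeSet ⊆
      Sym2.map (v ∘ Fin.castLE htx) '' (⊤ : SimpleGraph (Fin t)).edgeSet := by
    intro e he
    induction e using Sym2.ind with
    | h a b =>
      obtain ⟨hab, ⟨j, hj, rfl⟩, ⟨k, hk, rfl⟩⟩ := prefixGraph_adj.mp he
      refine ⟨s(⟨j, hj⟩, ⟨k, hk⟩), ?_, rfl⟩
      simpa using fun h => G.ne_of_adj hab (congrArg v (Fin.ext h))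
  calc (prefixGraph G v t).edgeSet.ncard
      ≤ (Sym2.map (v ∘ Fin.castLE htx) '' (⊤ : SimpleGraph (Fin t)).edgeSet).ncard :=
        Set.ncard_le_ncard hsub
    _ ≤ (⊤ : SimpleGraph (Fin t)).edgeSet.ncard := Set.ncard_image_le (Set.toFinite _)
    _ = t.choose 2 := by
      rw [← coe_edgeFinset, Set.ncard_coe_finset, card_edgeFinset_top_eq_card_choose_two,
        Fintype.card_fin]

variable (hS : IsSaturatingStructure G t x t F v)
  (hcore : ∀ i j : Fin x, (i : ℕ) < t → (j : ℕ) < t → i ≠ j → F.Adj (v i) (v j))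
include hS hcore

/- `max t j` covers both kinds of vertices: a core vertex is adjacent to the other `t - 1` core
vertices, a later one to its `t - 1` neighbours among its predecessors. -/
theorem IsSaturatingStructure.le_ncard_adj_lt_max (j : Fin x) :
    t - 1 ≤ {k : Fin x | (k : ℕ) < max t j ∧ F.Adj (v j) (v k)}.ncard := by
  obtain ⟨-, htx, -, -, -, hdeg⟩ := hS
  rcases lt_or_ge (j : ℕ) t with hj | hj
  · have hcoreSet : {k : Fin x | (k : ℕ) < t} = Set.Iio ⟨t, htx⟩ := by
      ext k; simp [Fin.lt_def]
    have hcard : {k : Fin x | (k : ℕ) < t}.ncard = t := by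
      rw [hcoreSet, Set.ncard_eq_toFinset_card', Set.toFinset_Iio, Fin.card_Iio]
    calc t - 1 = ({k : Fin x | (k : ℕ) < t} \ {j}).ncard := by
          rw [Set.ncard_sdiff_singleton_of_mem (show j ∈ {k : Fin x | (k : ℕ) < t} from hj),
            hcard]
      _ ≤ _ := Set.ncard_le_ncard fun k hk => by
          exact ⟨lt_max_of_lt_left hk.1, hcore j k hj hk.1 fun hjk => hk.2 hjk.symm⟩
  · rw [max_eq_right hj]
    exact (hdeg j hj).ge

theorem IsSaturatingStructure.le_ncard_neighborSet_prefixGraph [Finite V] {i : ℕ}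
    (hti : t ≤ i) {j : Fin x} (hj : (j : ℕ) < i) :
    t - 1 ≤ ((prefixGraph G v i).neighborSet (v j)).ncard := by
  refine (hS.le_ncard_adj_lt_max hcore j).trans ?_
  obtain ⟨-, -, hFG, hv, -, -⟩ := hS
  rw [← Set.ncard_image_of_injective _ hv]
  refine Set.ncard_le_ncard ?_
  rintro _ ⟨k, ⟨hk, hadj⟩, rfl⟩
  exact prefixGraph_adj.mpr
    ⟨hFG hadj, ⟨j, hj, rfl⟩, ⟨k, lt_of_lt_of_le hk (max_le hti hj.le), rfl⟩⟩

theorem IsSaturatingStructure.weaklySaturated_prefixGraph [Finite V] (ht : 0 < t) {i : ℕ}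
    (hti : t ≤ i) : WeaklySaturated (prefixGraph G v i) (prefixGraph G v t) (star t) := by
  induction i, hti using Nat.le_induction with
  | base => exact weaklySaturated_self
  | succ i hti ih =>
    refine WeaklySaturated.trans (weaklySaturated_star_of_forall_adj ht
      (prefixGraph_mono i.le_succ) ?_) ih
    intro _ _ hcd _
    obtain ⟨hG, ⟨j, hj, rfl⟩, ⟨k, hk, rfl⟩⟩ := prefixGraph_adj.mp hcd
    by_cases hji : (j : ℕ) < i
    · exact .inl (hS.le_ncard_neighborSet_prefixGraph hcore hti hji)
    · refine .inr (hS.le_ncard_neighborSet_prefixGraph hcore hti ?_)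
      by_contra hki
      exact G.ne_of_adj hG (congrArg v (Fin.ext (by simp at hj hk; omega)))

theorem IsSaturatingStructure.wsat_le_choose_two [Finite V] (ht : 0 < t)
    (hv : Function.Surjective v) : wsat G (star t) ≤ t.choose 2 := by
  have htx : t ≤ x := hS.2.1.le
  have hws := hS.weaklySaturated_prefixGraph hcore ht htx
  rw [prefixGraph_length hv] at hws
  exact (wsat_le_ncard hws).trans (ncard_edgeSet_prefixGraph_le htx)

theorem IsSaturatingStructure.le_ncard_neighborSet [Finite V] (hv : Function.Surjective v)
    (a : V) : t - 1 ≤ (G.neighborSet a).ncard := by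
  obtain ⟨j, rfl⟩ := hv a
  have hdeg := hS.le_ncard_neighborSet_prefixGraph hcore hS.2.1.le j.2
  rwa [prefixGraph_length hv] at hdeg

end SaturatingStructure

theorem stmt_13_general (t n : ℕ) (ht : 3 ≤ t) (G : SimpleGraph (Fin n))
    (h : ∃ (F : SimpleGraph (Fin n)) (v : Fin n → Fin n),
      IsSaturatingStructure G t n t F v ∧
      ∀ i j : Fin n, (i : ℕ) < t → (j : ℕ) < t → i ≠ j → F.Adj (v i) (v j)) :
    wsat G (star t) = Nat.choose t 2 := by
  obtain ⟨F, v, hS, hcore⟩ := h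
  have htn : t < n := hS.2.1
  have hv : Function.Surjective v := Finite.surjective_of_injective hS.2.2.2.1
  exact le_antisymm (hS.wsat_le_choose_two hcore (by omega) hv)
    (choose_two_le_wsat (by omega) (by simpa using htn.le) (hS.le_ncard_neighborSet hcore hv))

/-- if a connected graph `G` on `n` vertices contains a saturating structure of
length `n` whose core is isomorphic to `K_t`, then `wsat(G, K_{1,t}) = C(t,2)`. -/
theorem stmt_13 (t n : ℕ) (ht : 3 ≤ t) (G : SimpleGraph (Fin n)) (hG : G.Connected)
    (h : ∃ (F : SimpleGraph (Fin n)) (v : Fin n → Fin n),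
      IsSaturatingStructure G t n t F v ∧
      ∀ i j : Fin n, (i : ℕ) < t → (j : ℕ) < t → i ≠ j → F.Adj (v i) (v j)) :
    wsat G (star t) = Nat.choose t 2 :=
  stmt_13_general t n ht G h
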